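/- Let ξ : ℤ → {0,1} be a non-periodic Toeplitz sequence with period structure (p_ℓ)_{ℓ≥1}, Ω the associated odometer, and U, V, W = cl(U) the sets constructed from ξ. Then the topological boundary of W satisfies ∂W = Ω \ (U ∪ V). -/

import Mathlib

open MeasureTheory Set Filter Topology

noncomputable section

instance (n : ℕ) : TopologicalSpace (ZMod n) := ⊥
instance (n : ℕ) : DiscreteTopology (ZMod n) := ⟨rfl⟩
instance (n : ℕ) : MeasurableSpace (ZMod n) := ⊤

/-- The `p`-skeleton of a sequence `ξ : ℤ → {0,1}`:
the set of `p`-periodic positions of `ξ`. -/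
def Per (ξ : ℤ → Fin 2) (p : ℕ) : Set ℤ := {k | ∀ n : ℤ, ξ (k + n * p) = ξ k}

/-- The density `D(p)` of the `p`-skeleton:
`D(p) = #(Per(p,ξ) ∩ [0, p-1]) / p`. -/
def skelDensity (ξ : ℤ → Fin 2) (p : ℕ) : ℝ :=
  ((Per ξ p ∩ Set.Ico (0 : ℤ) (p : ℤ)).ncard : ℝ) / p

/-- `ξ` is a Toeplitz sequence: every position is periodic for some period `p ≥ 1`. -/
def IsToeplitz (ξ : ℤ → Fin 2) : Prop := ∀ k : ℤ, ∃ p : ℕ, 0 < p ∧ k ∈ Per ξ p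

/-- `ξ` is non-periodic: no `p ≥ 1` is a period of the whole sequence. -/
def IsNonPeriodic (ξ : ℤ → Fin 2) : Prop := ∀ p : ℕ, 0 < p → ∃ k : ℤ, ξ (k + p) ≠ ξ k

/-- `(p ℓ)` is a period structure for `ξ`: the `p ℓ` are positive, each divides the
next, and the `p ℓ`-skeletons exhaust `ℤ`. -/
def IsPeriodStructure (ξ : ℤ → Fin 2) (p : ℕ → ℕ) : Prop :=
  (∀ ℓ, 0 < p ℓ) ∧ (∀ ℓ, p ℓ ∣ p (ℓ + 1)) ∧ ∀ k : ℤ, ∃ ℓ, k ∈ Per ξ (p ℓ)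

/-- The odometer associated with a scale `p`, i.e. the closed subgroup of
`∏ ℓ, ℤ/p ℓ ℤ` of sequences compatible under the canonical projections
(whenever `p ℓ ∣ p (ℓ+1)`, which holds for period structures). -/
def odometer (p : ℕ → ℕ) : AddSubgroup (Π ℓ, ZMod (p ℓ)) where
  carrier := {x | ∀ ℓ, ∀ h : p ℓ ∣ p (ℓ + 1), ZMod.castHom h (ZMod (p ℓ)) (x (ℓ + 1)) = x ℓ}
  zero_mem' := by intro ℓ _; simp
  add_mem' := by intro a b ha hb ℓ h; simp only [Pi.add_apply, map_add, ha ℓ h, hb ℓ h]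
  neg_mem' := by intro a ha ℓ h; simp only [Pi.neg_apply, map_neg, ha ℓ h]

/-- The distinguished element `e` of the odometer, whose `ℓ`-th coordinate is
`1 mod p ℓ`; its `n`-th multiple `n • e` has `ℓ`-th coordinate `n mod p ℓ`. -/
def odometerGen (p : ℕ → ℕ) : odometer p := ⟨fun _ => 1, fun _ _ => map_one _⟩

/-- `A_s(ℓ) = {k mod p ℓ : k ∈ Per (p ℓ, ξ), ξ k = s} ⊆ ℤ/p ℓ ℤ`. -/
def Aset (ξ : ℤ → Fin 2) (p : ℕ → ℕ) (ℓ : ℕ) (s : Fin 2) : Set (ZMod (p ℓ)) :=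
  {c | ∃ k : ℤ, k ∈ Per ξ (p ℓ) ∧ ξ k = s ∧ (k : ZMod (p ℓ)) = c}

/-- `U_ℓ = {x ∈ Ω : x ℓ ∈ A_1(ℓ)}`. -/
def UsetL (ξ : ℤ → Fin 2) (p : ℕ → ℕ) (ℓ : ℕ) : Set (odometer p) :=
  {x | (x : Π ℓ, ZMod (p ℓ)) ℓ ∈ Aset ξ p ℓ 1}

/-- `V_ℓ = {x ∈ Ω : x ℓ ∈ A_0(ℓ)}`. -/
def VsetL (ξ : ℤ → Fin 2) (p : ℕ → ℕ) (ℓ : ℕ) : Set (odometer p) :=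
  {x | (x : Π ℓ, ZMod (p ℓ)) ℓ ∈ Aset ξ p ℓ 0}

/-- `U = ⋃ ℓ, U_ℓ`. -/
def Uset (ξ : ℤ → Fin 2) (p : ℕ → ℕ) : Set (odometer p) := ⋃ ℓ, UsetL ξ p ℓ

/-- `V = ⋃ ℓ, V_ℓ`. -/
def Vset (ξ : ℤ → Fin 2) (p : ℕ → ℕ) : Set (odometer p) := ⋃ ℓ, VsetL ξ p ℓ

/-- The window `W = cl(U)` constructed from `ξ`. -/
def Wset (ξ : ℤ → Fin 2) (p : ℕ → ℕ) : Set (odometer p) := closure (Uset ξ p)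

/-! `U` and `V` are open, and disjoint because the value of `ξ` at an integer approximating a
point of `Ω` is fixed by every level at which that point lies in a skeleton class. A point
`x ∉ U ∪ V` lies in the closure of both: at each level `L` the residue class of `x` mod `p L`
misses the `p L`-skeleton, so it carries both symbols, each at a position that is periodic for a
finer level. For disjoint open `U`, `V` whose closures contain `(U ∪ V)ᶜ`, the frontier of `cl U`
is exactly `(U ∪ V)ᶜ`. -/

theorem frontier_closure_eq_compl_union {X : Type*} [TopologicalSpace X] {U V : Set X}
    (hU : IsOpen U) (hV : IsOpen V) (hUV : Disjoint U V)
    (hcl : (U ∪ V)ᶜ ⊆ closure U ∩ closure V) :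
    frontier (closure U) = (U ∪ V)ᶜ := by
  have hclU_V : Disjoint (closure U) V := hUV.closure_left hV
  have hint_clV : Disjoint (interior (closure U)) (closure V) :=
    (hclU_V.mono_left interior_subset).closure_right isOpen_interior
  ext x
  rw [frontier, closure_closure, Set.mem_sdiff]
  constructor
  · rintro ⟨hxU, hx_int⟩ (h | h)
    · exact hx_int (hU.subset_interior_closure h)
    · exact hclU_V.notMem_of_mem_left hxU h
  · intro hx
    obtain ⟨hxU, hxV⟩ := hcl hx
    exact ⟨hxU, fun h => hint_clV.notMem_of_mem_left h hxV⟩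

section Skeleton

variable {ξ : ℤ → Fin 2}

theorem per_subset_per_of_dvd {q r : ℕ} (h : q ∣ r) : Per ξ q ⊆ Per ξ r := by
  obtain ⟨c, rfl⟩ := h
  intro k hk n
  convert hk (n * c) using 3
  push_cast
  ring

theorem apply_eq_of_mem_per {q : ℕ} {k k' : ℤ} (hk : k ∈ Per ξ q)
    (h : (k : ZMod q) = k') : ξ k' = ξ k := by
  obtain ⟨n, hn⟩ := (ZMod.intCast_eq_intCast_iff_dvd_sub k k' q).mp h
  rw [show k' = k + n * q by linarith, hk n]

theorem apply_eq_of_mem_Aset {p : ℕ → ℕ} {ℓ : ℕ} {s : Fin 2} {c : ZMod (p ℓ)} {k : ℤ}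
    (hc : c ∈ Aset ξ p ℓ s) (hk : (k : ZMod (p ℓ)) = c) : ξ k = s := by
  obtain ⟨k', hk'per, hk's, rfl⟩ := hc
  rw [apply_eq_of_mem_per hk'per hk.symm, hk's]

end Skeleton

section Odometer

variable {p : ℕ → ℕ}

theorem odometer_apply_eq_of_le (hd : ∀ ℓ, p ℓ ∣ p (ℓ + 1)) {x y : odometer p} {i m : ℕ}
    (him : i ≤ m) (h : (x : Π ℓ, ZMod (p ℓ)) m = (y : Π ℓ, ZMod (p ℓ)) m) :
    (x : Π ℓ, ZMod (p ℓ)) i = (y : Π ℓ, ZMod (p ℓ)) i := by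
  induction m, him using Nat.le_induction with
  | base => exact h
  | succ m _ ih => exact ih (by rw [← x.2 m (hd m), ← y.2 m (hd m), h])

@[simp]
theorem zsmul_odometerGen_apply (k : ℤ) (j : ℕ) :
    ((k • odometerGen p : odometer p) : Π ℓ, ZMod (p ℓ)) j = k := by
  simp [odometerGen]

theorem isOpen_setOf_odometer_apply_mem (m : ℕ) (A : Set (ZMod (p m))) :
    IsOpen {x : odometer p | (x : Π ℓ, ZMod (p ℓ)) m ∈ A} :=
  (isOpen_discrete A).preimage ((continuous_apply m).comp continuous_subtype_val)

theorem mem_closure_of_forall_exists_odometer_apply_eq (hd : ∀ ℓ, p ℓ ∣ p (ℓ + 1))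
    {S : Set (odometer p)} {x : odometer p}
    (h : ∀ L, ∃ y ∈ S, (y : Π ℓ, ZMod (p ℓ)) L = (x : Π ℓ, ZMod (p ℓ)) L) :
    x ∈ closure S := by
  rw [mem_closure_iff]
  rintro o ho hxo
  obtain ⟨t, ht, rfl⟩ := isOpen_induced_iff.mp ho
  obtain ⟨I, u, hxu, hut⟩ := isOpen_pi_iff.mp ht _ hxo
  obtain ⟨y, hyS, hyx⟩ := h (I.sup id)
  refine ⟨y, hut fun i hi => ?_, hyS⟩
  have hiL : i ≤ I.sup id := Finset.le_sup (f := id) hi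
  rw [odometer_apply_eq_of_le hd hiL hyx]
  exact (hxu i hi).2

end Odometer

section Window

variable {ξ : ℤ → Fin 2} {p : ℕ → ℕ}

theorem isOpen_Uset : IsOpen (Uset ξ p) :=
  isOpen_iUnion fun ℓ => isOpen_setOf_odometer_apply_mem ℓ _

theorem isOpen_Vset : IsOpen (Vset ξ p) :=
  isOpen_iUnion fun ℓ => isOpen_setOf_odometer_apply_mem ℓ _

theorem disjoint_Uset_Vset (hd : ∀ ℓ, p ℓ ∣ p (ℓ + 1)) : Disjoint (Uset ξ p) (Vset ξ p) := by
  rw [Set.disjoint_left]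
  rintro x hxU hxV
  obtain ⟨ℓ, hxℓ⟩ := mem_iUnion.mp hxU
  obtain ⟨m, hxm⟩ := mem_iUnion.mp hxV
  obtain ⟨k, hk⟩ := ZMod.intCast_surjective ((x : Π ℓ, ZMod (p ℓ)) (max ℓ m))
  have hkx : ∀ i ≤ max ℓ m, (k : ZMod (p i)) = (x : Π ℓ, ZMod (p ℓ)) i := fun i hi => by
    simpa using odometer_apply_eq_of_le hd (y := x) (x := k • odometerGen p) hi (by simpa using hk)
  have h1 : ξ k = 1 := apply_eq_of_mem_Aset hxℓ (hkx ℓ (le_max_left ℓ m))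
  have h0 : ξ k = 0 := apply_eq_of_mem_Aset hxm (hkx m (le_max_right ℓ m))
  exact absurd (h1.symm.trans h0) (by decide)

theorem mem_closure_of_notMem_Uset_union_Vset (hd : ∀ ℓ, p ℓ ∣ p (ℓ + 1))
    (hcov : ∀ k : ℤ, ∃ ℓ, k ∈ Per ξ (p ℓ)) {x : odometer p}
    (hxU : x ∉ Uset ξ p) (hxV : x ∉ Vset ξ p) (s : Fin 2) :
    x ∈ closure (⋃ m, {y : odometer p | (y : Π ℓ, ZMod (p ℓ)) m ∈ Aset ξ p m s}) := by
  refine mem_closure_of_forall_exists_odometer_apply_eq hd fun L => ?_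
  obtain ⟨k₀, hk₀⟩ := ZMod.intCast_surjective ((x : Π ℓ, ZMod (p ℓ)) L)
  have hs : ∃ n : ℤ, ξ (k₀ + n * p L) = s := by
    by_contra! hne
    -- otherwise `ξ` is constant on the class of `k₀`, which puts `x` into `U_L` or `V_L`
    have hper : k₀ ∈ Per ξ (p L) := fun n =>
      Fin.ext (by have := hne n; have := hne 0; simp only [zero_mul, add_zero] at *; omega)
    have hA : (x : Π ℓ, ZMod (p ℓ)) L ∈ Aset ξ p L (ξ k₀) := ⟨k₀, hper, rfl, hk₀⟩
    obtain h | h : ξ k₀ = 0 ∨ ξ k₀ = 1 := by omega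
    · exact hxV (mem_iUnion.mpr ⟨L, show _ ∈ Aset ξ p L 0 from h ▸ hA⟩)
    · exact hxU (mem_iUnion.mpr ⟨L, show _ ∈ Aset ξ p L 1 from h ▸ hA⟩)
  obtain ⟨n, hn⟩ := hs
  obtain ⟨m, hm⟩ := hcov (k₀ + n * p L)
  have hper : k₀ + n * p L ∈ Per ξ (p (max L m)) :=
    per_subset_per_of_dvd (Nat.rel_of_forall_rel_succ_of_le (· ∣ ·) hd (le_max_right L m)) hm
  refine ⟨(k₀ + n * p L) • odometerGen p,
    mem_iUnion.mpr ⟨max L m, k₀ + n * p L, hper, hn, (zsmul_odometerGen_apply _ _).symm⟩, ?_⟩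
  simp [hk₀]

end Window

theorem toeplitz_frontier_eq_general (ξ : ℤ → Fin 2) (p : ℕ → ℕ) (hps : IsPeriodStructure ξ p) :
    frontier (Wset ξ p) = (Uset ξ p ∪ Vset ξ p)ᶜ := by
  obtain ⟨-, hd, hcov⟩ := hps
  refine frontier_closure_eq_compl_union isOpen_Uset isOpen_Vset (disjoint_Uset_Vset hd)
    fun x hx => ?_
  rw [mem_compl_iff, mem_union, not_or] at hx
  exact ⟨mem_closure_of_notMem_Uset_union_Vset hd hcov hx.1 hx.2 1,
    mem_closure_of_notMem_Uset_union_Vset hd hcov hx.1 hx.2 0⟩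

/-- For a non-periodic Toeplitz sequence `ξ` with period structure
`(p ℓ)`, the boundary of the window `W = cl U` satisfies `∂W = Ω \ (U ∪ V)`. -/
theorem toeplitz_frontier_eq (ξ : ℤ → Fin 2) (hT : IsToeplitz ξ)
    (hNP : IsNonPeriodic ξ) (p : ℕ → ℕ) (hps : IsPeriodStructure ξ p) :
    frontier (Wset ξ p) = (Uset ξ p ∪ Vset ξ p)ᶜ :=
  toeplitz_frontier_eq_general ξ p hps
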